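/- (Universality of the Tutte polynomial.) Let R be a commutative ring, let a, b ∈ R, and let f be a function assigning an element of R to every matroid with finite ground set contained in ℕ, such that: (i) f(M₁) = f(M₂) whenever M₁ and M₂ are isomorphic matroids; (ii) f of the empty matroid equals 1; (iii) for every such matroid M and every element e of its ground set, f(M) = a·f(M∖e) + b·f(M/e) if e is neither a loop nor a coloop, f(M) = f(M∖e)·f(L) if e is a loop, and f(M) = f(M/e)·f(C) if e is a coloop, where f(L) and f(C) denote the values of f on a single loop and a single coloop respectively. Then for every matroid M with finite ground set E of size n and rank r = r(E), one has f(M) = Σ_{B⊆E} a^{(n−|B|)−(r−r(B))} · b^{r(B)} · (f(C)−b)^{r−r(B)} · (f(L)−a)^{|B|−r(B)}; equivalently (when a and b are invertible), f(M) = a^{n−r} b^{r} T(M; f(C)/b, f(L)/a). -/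

import Mathlib

/-!
Both sides satisfy the same deletion–contraction recursion. Splitting the subsets of `insert e E`
according to whether they contain `e`, the sum factors as `(a + y) · (sum for M ∖ e)` when `e` is a
loop, as `(x + b) · (sum for M / e)` when `e` is a coloop, and as
`a · (sum for M ∖ e) + b · (sum for M / e)` otherwise; here `x = f C - b` and `y = f L - a`, so
`a + y = f L` and `x + b = f C`. Induction on `E` then identifies the sum with `f`; at `E = ∅`,
isomorphism invariance replaces an arbitrary rank function by the zero one.
-/

open scoped BigOperators

/-- `r` is the rank function of a matroid: normalized (`r B ≤ |B|`), monotone, submodular. -/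
def IsRankFn (r : Finset ℕ → ℕ) : Prop :=
  (∀ B, r B ≤ B.card) ∧ (∀ B C, B ⊆ C → r B ≤ r C) ∧
    (∀ B C, r (B ∪ C) + r (B ∩ C) ≤ r B + r C)

def contractRank (r : Finset ℕ → ℕ) (e : ℕ) (B : Finset ℕ) : ℕ :=
  r (insert e B) - r {e}

namespace IsRankFn

variable {r : Finset ℕ → ℕ} {e : ℕ} {B C : Finset ℕ}

theorem rank_le_card (hr : IsRankFn r) (B : Finset ℕ) : r B ≤ B.card := hr.1 B

theorem mono (hr : IsRankFn r) (h : B ⊆ C) : r B ≤ r C := hr.2.1 B C h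

theorem submod (hr : IsRankFn r) (B C : Finset ℕ) : r (B ∪ C) + r (B ∩ C) ≤ r B + r C :=
  hr.2.2 B C

theorem rank_empty (hr : IsRankFn r) : r ∅ = 0 :=
  Nat.le_zero.mp (hr.rank_le_card ∅)

theorem rank_singleton_le_one (hr : IsRankFn r) (e : ℕ) : r {e} ≤ 1 :=
  hr.rank_le_card {e}

theorem rank_le_rank_insert (hr : IsRankFn r) (e : ℕ) (B : Finset ℕ) : r B ≤ r (insert e B) :=
  hr.mono (Finset.subset_insert e B)

theorem rank_singleton_le_rank_insert (hr : IsRankFn r) (e : ℕ) (B : Finset ℕ) :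
    r {e} ≤ r (insert e B) :=
  hr.mono (Finset.singleton_subset_iff.mpr (Finset.mem_insert_self e B))

theorem rank_insert_le (hr : IsRankFn r) (e : ℕ) (B : Finset ℕ) :
    r (insert e B) ≤ r B + r {e} := by
  have h := hr.submod B {e}
  rw [Finset.union_singleton] at h
  omega

theorem rank_union_le (hr : IsRankFn r) (B D : Finset ℕ) : r (B ∪ D) ≤ r B + D.card := by
  induction D using Finset.induction_on with
  | empty => simp
  | insert x D hx ih =>
    rw [Finset.union_insert, Finset.card_insert_of_notMem hx]
    have := hr.rank_insert_le x (B ∪ D)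
    have := hr.rank_singleton_le_one x
    omega

theorem rank_sub_rank_le (hr : IsRankFn r) (h : B ⊆ C) : r C - r B ≤ C.card - B.card := by
  have := hr.rank_union_le B (C \ B)
  rw [Finset.union_sdiff_of_subset h, Finset.card_sdiff_of_subset h] at this
  omega

theorem rank_insert_of_loop (hr : IsRankFn r) (he : r {e} = 0) (B : Finset ℕ) :
    r (insert e B) = r B := by
  have := hr.rank_insert_le e B
  have := hr.rank_le_rank_insert e B
  omega

theorem rank_insert_of_coloop (hr : IsRankFn r) {E : Finset ℕ} (he : e ∉ E)
    (hcol : r (insert e E) = r E + 1) (hB : B ⊆ E) : r (insert e B) = r B + 1 := by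
  have h := hr.submod (insert e B) E
  rw [Finset.insert_union, Finset.union_eq_right.mpr hB, Finset.insert_inter_of_notMem he,
    Finset.inter_eq_left.mpr hB] at h
  have := hr.rank_insert_le e B
  have := hr.rank_singleton_le_one e
  omega

theorem contract (hr : IsRankFn r) (e : ℕ) : IsRankFn (contractRank r e) := by
  have hle := hr.rank_singleton_le_rank_insert e
  refine ⟨fun B => ?_, fun B C hBC => ?_, fun B C => ?_⟩
  · have := hr.rank_insert_le e B
    have := hr.rank_le_card B
    simp only [contractRank]
    omega
  · have := hr.mono (Finset.insert_subset_insert e hBC)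
    simp only [contractRank]
    omega
  · have h := hr.submod (insert e B) (insert e C)
    rw [← Finset.insert_union_distrib, ← Finset.insert_inter_distrib] at h
    have := hle (B ∪ C)
    have := hle (B ∩ C)
    simp only [contractRank]
    omega

end IsRankFn

section TutteSum

variable {R : Type} [CommRing R] (a b x y : R)

/-- The summand for a subset of size `k` and rank `s` of a ground set of size `n` and rank `ρ`. -/
def tutteTerm (n ρ k s : ℕ) : R :=
  a ^ ((n - k) - (ρ - s)) * b ^ s * x ^ (ρ - s) * y ^ (k - s)

/-- `a ^ (n - ρ) * b ^ ρ * T(M; x / b + 1, y / a + 1)` when `a`, `b` are invertible. -/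
def tutteSum (E : Finset ℕ) (r : Finset ℕ → ℕ) : R :=
  ∑ B ∈ E.powerset, tutteTerm a b x y E.card (r E) B.card (r B)

variable {a b x y} {n ρ k s : ℕ}

theorem tutteTerm_succ_ground (hk : k ≤ n) (h : ρ - s ≤ n - k) :
    tutteTerm a b x y (n + 1) ρ k s = a * tutteTerm a b x y n ρ k s := by
  rw [tutteTerm, tutteTerm, show n + 1 - k - (ρ - s) = n - k - (ρ - s) + 1 by omega, pow_succ]
  ring

theorem tutteTerm_succ_ground_succ_card (hs : s ≤ k) :
    tutteTerm a b x y (n + 1) ρ (k + 1) s = y * tutteTerm a b x y n ρ k s := by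
  rw [tutteTerm, tutteTerm, Nat.add_sub_add_right, show k + 1 - s = k - s + 1 by omega, pow_succ]
  ring

theorem tutteTerm_succ_ground_succ_rank (hs : s ≤ ρ) :
    tutteTerm a b x y (n + 1) (ρ + 1) k s = x * tutteTerm a b x y n ρ k s := by
  rw [tutteTerm, tutteTerm, show n + 1 - k - (ρ + 1 - s) = n - k - (ρ - s) by omega,
    show ρ + 1 - s = ρ - s + 1 by omega, pow_succ]
  ring

theorem tutteTerm_succ_all :
    tutteTerm a b x y (n + 1) (ρ + 1) (k + 1) (s + 1) = b * tutteTerm a b x y n ρ k s := by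
  simp only [tutteTerm, Nat.add_sub_add_right, pow_succ]
  ring

variable {e : ℕ} {E : Finset ℕ} {r : Finset ℕ → ℕ}

theorem tutteSum_empty (h : r ∅ = 0) : tutteSum a b x y ∅ r = 1 := by
  simp [tutteSum, tutteTerm, h]

theorem tutteSum_insert (he : e ∉ E) :
    tutteSum a b x y (insert e E) r = ∑ B ∈ E.powerset,
      (tutteTerm a b x y (E.card + 1) (r (insert e E)) B.card (r B) +
        tutteTerm a b x y (E.card + 1) (r (insert e E)) (B.card + 1) (r (insert e B))) := by
  rw [tutteSum, Finset.sum_powerset_insert he, ← Finset.sum_add_distrib,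
    Finset.card_insert_of_notMem he]
  refine Finset.sum_congr rfl fun B hB => ?_
  rw [Finset.card_insert_of_notMem fun heB => he (Finset.mem_powerset.mp hB heB)]

theorem tutteSum_insert_of_loop (hr : IsRankFn r) (he : e ∉ E) (hloop : r {e} = 0) :
    tutteSum a b x y (insert e E) r = (a + y) * tutteSum a b x y E r := by
  rw [tutteSum_insert he, tutteSum, Finset.mul_sum]
  refine Finset.sum_congr rfl fun B hB => ?_
  have hBE := Finset.mem_powerset.mp hB
  rw [hr.rank_insert_of_loop hloop, hr.rank_insert_of_loop hloop,
    tutteTerm_succ_ground (Finset.card_le_card hBE) (hr.rank_sub_rank_le hBE),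
    tutteTerm_succ_ground_succ_card (hr.rank_le_card B)]
  ring

theorem tutteSum_insert_of_coloop (hr : IsRankFn r) (he : e ∉ E)
    (hcol : r (insert e E) = r E + 1) :
    tutteSum a b x y (insert e E) r = (x + b) * tutteSum a b x y E (contractRank r e) := by
  have he1 : r {e} = 1 := by
    simpa [hr.rank_empty] using hr.rank_insert_of_coloop he hcol (Finset.empty_subset E)
  have hcontr : ∀ B ⊆ E, contractRank r e B = r B := fun B hB => by
    rw [contractRank, hr.rank_insert_of_coloop he hcol hB, he1, Nat.add_sub_cancel]
  rw [tutteSum_insert he, tutteSum, Finset.mul_sum, hcontr E subset_rfl]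
  refine Finset.sum_congr rfl fun B hB => ?_
  have hBE := Finset.mem_powerset.mp hB
  rw [hcontr B hBE, hcol, hr.rank_insert_of_coloop he hcol hBE,
    tutteTerm_succ_ground_succ_rank (hr.mono hBE), tutteTerm_succ_all]
  ring

theorem tutteSum_insert_of_not_loop_of_not_coloop (hr : IsRankFn r) (he : e ∉ E)
    (hloop : r {e} ≠ 0) (hcol : r (insert e E) ≠ r E + 1) :
    tutteSum a b x y (insert e E) r =
      a * tutteSum a b x y E r + b * tutteSum a b x y E (contractRank r e) := by
  have he1 : r {e} = 1 := by have := hr.rank_singleton_le_one e; omega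
  have hrank : r (insert e E) = r E := by
    have := hr.rank_insert_le e E
    have := hr.rank_le_rank_insert e E
    omega
  have hsucc : ∀ B, contractRank r e B + 1 = r (insert e B) := fun B => by
    have := hr.rank_singleton_le_rank_insert e B
    simp only [contractRank]
    omega
  rw [tutteSum_insert he, tutteSum, tutteSum, Finset.mul_sum, Finset.mul_sum,
    ← Finset.sum_add_distrib]
  refine Finset.sum_congr rfl fun B hB => ?_
  have hBE := Finset.mem_powerset.mp hB
  rw [← hsucc B, ← hsucc E, tutteTerm_succ_all, hsucc E, hrank,
    tutteTerm_succ_ground (Finset.card_le_card hBE) (hr.rank_sub_rank_le hBE)]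

end TutteSum

/-- **Universality of the Tutte polynomial.** Let `R` be a commutative ring, `a b : R`, and let
`f` assign an element of `R` to each matroid `(E, r)` with ground set `E ⊆ ℕ`, such that:
(i) `f` is invariant under matroid isomorphism; (ii) `f` of the empty matroid is `1`;
(iii) `f M = a·f(M\e) + b·f(M/e)` if `e ∈ E` is neither a loop nor a coloop,
`f M = f(M\e)·f(L)` if `e` is a loop, and `f M = f(M/e)·f(C)` if `e` is a coloop, where
`L = ({0}, B ↦ 0)` is a single loop and `C = ({0}, B ↦ |B ∩ {0}|)` is a single coloop.
Then `f M = Σ_{B ⊆ E} a^((n-|B|)-(r E - r B)) b^(r B) (f C - b)^(r E - r B) (f L - a)^(|B| - r B)`,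
i.e. (for `a`, `b` invertible) `f M = a^(n-r) b^r T(M; f(C)/b, f(L)/a)`. -/
theorem tutte_universality {R : Type} [CommRing R] (a b : R)
    (f : Finset ℕ → (Finset ℕ → ℕ) → R)
    (hiso : ∀ (E₁ E₂ : Finset ℕ) (r₁ r₂ : Finset ℕ → ℕ), IsRankFn r₁ → IsRankFn r₂ →
      (∃ φ : ℕ → ℕ, Set.BijOn φ ↑E₁ ↑E₂ ∧ ∀ B ⊆ E₁, r₂ (Finset.image φ B) = r₁ B) →
      f E₁ r₁ = f E₂ r₂)
    (hempty : f ∅ (fun _ => 0) = 1)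
    (hrec : ∀ E r, IsRankFn r → ∀ e ∈ E,
      ((r {e} ≠ 0 ∧ r (E.erase e) + 1 ≠ r E) →
        f E r = a * f (E.erase e) r +
          b * f (E.erase e) (fun B => r (insert e B) - r {e})) ∧
      (r {e} = 0 →
        f E r = f (E.erase e) r * f {0} (fun _ => 0)) ∧
      (r (E.erase e) + 1 = r E →
        f E r = f (E.erase e) (fun B => r (insert e B) - r {e}) *
          f {0} (fun B => (B ∩ {0}).card)))
    (E : Finset ℕ) (r : Finset ℕ → ℕ) (hr : IsRankFn r) :
    f E r = ∑ B ∈ E.powerset,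
      a ^ ((E.card - B.card) - (r E - r B)) * b ^ r B *
        (f {0} (fun B => (B ∩ {0}).card) - b) ^ (r E - r B) *
        (f {0} (fun _ => 0) - a) ^ (B.card - r B) := by
  have hf_empty : ∀ r, IsRankFn r → f ∅ r = 1 := fun r hr => by
    rw [← hempty]
    refine hiso ∅ ∅ r _ hr ⟨fun _ => Nat.zero_le _, fun _ _ _ => le_rfl, fun _ _ => le_rfl⟩
      ⟨id, by simp, fun B hB => ?_⟩
    rw [Finset.subset_empty.mp hB, hr.rank_empty]
  change f E r = tutteSum a b _ _ E r
  induction E using Finset.induction_on generalizing r with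
  | empty => rw [hf_empty r hr, tutteSum_empty hr.rank_empty]
  | insert e E he ih =>
    obtain ⟨hgeneric, hloop, hcoloop⟩ := hrec (insert e E) r hr e (Finset.mem_insert_self e E)
    have hcontract : (fun B => r (insert e B) - r {e}) = contractRank r e := rfl
    rw [Finset.erase_insert he, hcontract] at hgeneric hcoloop
    rw [Finset.erase_insert he] at hloop
    by_cases hl : r {e} = 0
    · rw [hloop hl, ih r hr, tutteSum_insert_of_loop hr he hl]
      ring
    by_cases hc : r E + 1 = r (insert e E)
    · rw [hcoloop hc, ih _ (hr.contract e), tutteSum_insert_of_coloop hr he hc.symm]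
      ring
    · rw [hgeneric ⟨hl, hc⟩, ih r hr, ih _ (hr.contract e),
        tutteSum_insert_of_not_loop_of_not_coloop hr he hl (Ne.symm hc)]
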